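/- arXiv:math/0411016 — 2 statements merged into one kernel-verified Lean document; each statement's English description precedes it below -/
import Mathlib

section
/- Let S ⊆ ℝⁿ be a finite union of basic semialgebraic sets, where each basic set has the form {x : p_i(x) ≥ 0 for all i ∈ F, q_j(x) > 0 for all j ∈ G} for finite families of polynomials. If S has empty interior, then there exists a nonzero polynomial P on ℝⁿ such that S ⊆ P⁻¹(0). -/
open MvPolynomial

theorem stmt6 (n : ℕ) {ι : Type*} [Fintype ι] (B : ι → Set (Fin n → ℝ))
    (hbasic : ∀ k : ι, ∃ F G : Finset (MvPolynomial (Fin n) ℝ),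
      B k = {x | (∀ p ∈ F, 0 ≤ MvPolynomial.eval x p) ∧
                 ∀ q ∈ G, 0 < MvPolynomial.eval x q})
    (S : Set (Fin n → ℝ)) (hS : S = ⋃ k, B k) (hint : interior S = ∅) :
    ∃ P : MvPolynomial (Fin n) ℝ, P ≠ 0 ∧ ∀ x ∈ S, MvPolynomial.eval x P = 0 := by
  -- For each k, find a nonzero polynomial vanishing on B k
  have key : ∀ k : ι, ∃ P : MvPolynomial (Fin n) ℝ, P ≠ 0 ∧
      ∀ x ∈ B k, MvPolynomial.eval x P = 0 := by
    intro k
    obtain ⟨F, G, hFG⟩ := hbasic k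
    set F' : Finset (MvPolynomial (Fin n) ℝ) := F.filter (· ≠ 0) with hF'
    refine ⟨∏ p ∈ F', p, ?_, ?_⟩
    · exact Finset.prod_ne_zero_iff.mpr fun p hp => (Finset.mem_filter.mp hp).2
    · intro x hx
      rw [hFG] at hx
      -- some p ∈ F' must vanish at x, else x would be in an open subset of S
      by_contra h
      rw [map_prod] at h
      have hpos : ∀ p ∈ F', 0 < MvPolynomial.eval x p := by
        intro p hp
        rcases (hx.1 p (Finset.mem_filter.mp hp).1).lt_or_eq with h1 | h1
        · exact h1
        · exact absurd (Finset.prod_eq_zero hp h1.symm) h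
      -- the open set
      set U : Set (Fin n → ℝ) :=
        (⋂ p ∈ F', {y | 0 < MvPolynomial.eval y p}) ∩
          (⋂ q ∈ G, {y | 0 < MvPolynomial.eval y q}) with hU
      have hUopen : IsOpen U := by
        apply IsOpen.inter
        · exact isOpen_biInter_finset fun p _ =>
            isOpen_lt continuous_const (MvPolynomial.continuous_eval p)
        · exact isOpen_biInter_finset fun q _ =>
            isOpen_lt continuous_const (MvPolynomial.continuous_eval q)
      have hxU : x ∈ U := by
        refine ⟨Set.mem_iInter₂.mpr hpos, Set.mem_iInter₂.mpr hx.2⟩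
      have hUS : U ⊆ S := by
        intro y hy
        rw [hS]
        refine Set.mem_iUnion.mpr ⟨k, ?_⟩
        rw [hFG]
        refine ⟨fun p hp => ?_, fun q hq => Set.mem_iInter₂.mp hy.2 q hq⟩
        by_cases hp0 : p = 0
        · simp [hp0]
        · exact (Set.mem_iInter₂.mp hy.1 p (Finset.mem_filter.mpr ⟨hp, hp0⟩)).le
      have : x ∈ interior S := mem_interior.mpr ⟨U, hUS, hUopen, hxU⟩
      rw [hint] at this
      exact this
  choose P hP0 hPv using key
  refine ⟨∏ k, P k, Finset.prod_ne_zero_iff.mpr fun k _ => hP0 k, ?_⟩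
  intro x hx
  rw [hS] at hx
  obtain ⟨k, hk⟩ := Set.mem_iUnion.mp hx
  rw [map_prod]
  exact Finset.prod_eq_zero (Finset.mem_univ k) (hPv k x hk)
end

section
/- Let m ≥ 1 and let q be an integer with q² ≡ 1 (mod m). Then gcd(m, q−1) · gcd(m, q+1) equals either m or 2m. -/
/-!
Since `m ∣ (q - 1)(q + 1)`, `m` divides `gcd(m, q - 1) · gcd(m, q + 1)`. Conversely this product is
the gcd times the lcm of its two factors; the lcm divides `m` and the gcd divides
`gcd(q - 1, q + 1)`, which divides `2`. So the product divides `2m`, and as `2` is prime it is `m`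
or `2m`.
-/

section GCDMonoid

variable {α : Type*} [CommMonoidWithZero α] [GCDMonoid α]

theorem dvd_gcd_mul_gcd_of_dvd_mul {a b c : α} (h : a ∣ b * c) : a ∣ gcd a b * gcd a c :=
  (dvd_gcd dvd_rfl h).trans (gcd_mul_dvd_mul_gcd a b c)

theorem gcd_mul_gcd_dvd_mul_gcd (a b c : α) : gcd a b * gcd a c ∣ a * gcd b c := by
  rw [← (gcd_mul_lcm (gcd a b) (gcd a c)).dvd_iff_dvd_left, mul_comm a]
  exact mul_dvd_mul (gcd_dvd_gcd (gcd_dvd_right a b) (gcd_dvd_right a c))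
    (lcm_dvd (gcd_dvd_left a b) (gcd_dvd_left a c))

end GCDMonoid

theorem Int.gcd_sub_one_add_one_dvd_two (q : ℤ) : Int.gcd (q - 1) (q + 1) ∣ 2 := by
  have h := Int.dvd_sub (Int.gcd_dvd_right (q - 1) (q + 1)) (Int.gcd_dvd_left (q - 1) (q + 1))
  rw [show q + 1 - (q - 1) = 2 by ring] at h
  exact_mod_cast h

theorem Nat.eq_or_eq_mul_of_dvd_of_dvd_prime_mul {p m x : ℕ} (hp : p.Prime) (hmx : m ∣ x)
    (hx : x ∣ p * m) : x = m ∨ x = p * m := by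
  obtain ⟨k, rfl⟩ := hmx
  rcases Nat.eq_zero_or_pos m with rfl | hm
  · simp
  have hk : k ∣ p := Nat.dvd_of_mul_dvd_mul_left hm (by rwa [mul_comm p m] at hx)
  rcases (Nat.dvd_prime hp).mp hk with rfl | rfl
  · exact Or.inl (mul_one m)
  · exact Or.inr (mul_comm m k)

theorem stmt9_general (m : ℕ) (q : ℤ) (h : (m : ℤ) ∣ q ^ 2 - 1) :
    Int.gcd (m : ℤ) (q - 1) * Int.gcd (m : ℤ) (q + 1) = m ∨
    Int.gcd (m : ℤ) (q - 1) * Int.gcd (m : ℤ) (q + 1) = 2 * m := by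
  apply Nat.eq_or_eq_mul_of_dvd_of_dvd_prime_mul Nat.prime_two
  · have hm : (m : ℤ) ∣ (q - 1) * (q + 1) := by rwa [show q ^ 2 - 1 = (q - 1) * (q + 1) by ring] at h
    rw [← Int.natCast_dvd_natCast]
    push_cast [Int.coe_gcd]
    exact dvd_gcd_mul_gcd_of_dvd_mul hm
  · have h2 : Int.gcd (q - 1) (q + 1) ∣ 2 := Int.gcd_sub_one_add_one_dvd_two q
    rw [← Int.natCast_dvd_natCast] at h2 ⊢
    push_cast [Int.coe_gcd] at h2 ⊢
    rw [mul_comm 2]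
    exact (gcd_mul_gcd_dvd_mul_gcd _ _ _).trans (mul_dvd_mul_left _ h2)

theorem stmt9 (m : ℕ) (hm : 1 ≤ m) (q : ℤ) (h : (m : ℤ) ∣ q ^ 2 - 1) :
    Int.gcd (m : ℤ) (q - 1) * Int.gcd (m : ℤ) (q + 1) = m ∨
    Int.gcd (m : ℤ) (q - 1) * Int.gcd (m : ℤ) (q + 1) = 2 * m :=
  stmt9_general m q h
end
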